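/- Let E be a normed real vector space with E ≠ {0}, and let K ⊂ E be a nonempty compact set. Then the topological frontier of the convex hull of K has nonempty intersection with K; that is, frontier(convexHull ℝ K) ∩ K ≠ ∅. -/
import Mathlib


theorem frontier_convexHull_inter_nonempty {E : Type*} [NormedAddCommGroup E]
    [NormedSpace ℝ E] [Nontrivial E] (K : Set E) (hK : K.Nonempty) (hKc : IsCompact K) :
    (frontier (convexHull ℝ K) ∩ K).Nonempty := by
  obtain ⟨k₀, hk₀⟩ := hK
  obtain ⟨x, hxK, hxmax⟩ := hKc.exists_isMaxOn ⟨k₀, hk₀⟩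
    (continuous_id.dist continuous_const).continuousOn
  set r := dist x k₀ with hr
  have hsub : convexHull ℝ K ⊆ Metric.closedBall k₀ r := by
    apply convexHull_min _ (convex_closedBall k₀ r)
    intro y hy
    exact hxmax hy
  refine ⟨x, ⟨?_, ?_⟩, hxK⟩
  · exact subset_closure (subset_convexHull ℝ K hxK)
  · intro hmem
    have : x ∈ Metric.ball k₀ r := by
      have := interior_mono hsub hmem
      rwa [interior_closedBall' k₀ r] at this
    simp [Metric.mem_ball, hr] at this
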